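/- Fix n ≥ 1, set b = ⌊log₂ n⌋ + 2, and let t be an integer. In ℤ[X₀, …, X_{b−1}], let I′ be the ideal generated by Xᵢ² − (−2·Xᵢ + X_{i+1}) for 0 ≤ i ≤ b−2 together with X_{b−1}². If g is a multilinear polynomial with (t + 1 + X₀)ⁿ − g ∈ I′, then evaluating g at X₀ = X₁ = ⋯ = X_{b−1} = 1 gives ∑_{k=0}^{n} C(n,k)·t^{n−k}·2^{wt(k)}, the t-th binomial transform of Gould's sequence, where wt(k) is the number of ones in the binary expansion of k. -/

import Mathlib

/-!
Put `m = b - 1` and substitute `Xᵢ ↦ Y ^ 2 ^ i - 1` in `ℤ[Y]`. Since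
`(Y ^ 2 ^ i - 1)² + 2 (Y ^ 2 ^ i - 1) = Y ^ 2 ^ (i + 1) - 1`, the ideal `I′` lands in the ideal
generated by `(Y ^ 2 ^ m - 1)²`, and `(t + 1 + X₀)ⁿ` becomes `(Y + t)ⁿ`.
Consider the linear functional `L` on `ℤ[Y]` with `L (Y ^ (q * 2 ^ m + r)) = (q + 1) * 2 ^ wt r` for
`r < 2 ^ m`. It is affine in `q`, hence kills the multiples of `(Y ^ 2 ^ m - 1)²`; it agrees with
`Yᵏ ↦ 2 ^ wt k` below degree `2 ^ m`, where `n` lies; and it is `1` on every product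
`∏_{i ∈ s} (Y ^ 2 ^ i - 1)` with `s ⊆ {0, …, m}`, because multiplying a polynomial of degree
`< 2 ^ i` by `Y ^ 2 ^ i` adds one binary digit to every exponent and so doubles its weight.
So after the substitution, `L` evaluates multilinear polynomials at `1`, vanishes on `I′`, and sends
`(t + 1 + X₀)ⁿ` to the binomial transform of Gould's sequence.
-/

open MvPolynomial

/-- The generators of the ideal `I′`: `Xᵢ² − (−2Xᵢ + X_{i+1})` for `i ≤ b-2`, and `X_{b-1}²`. -/
noncomputable def gens' (b : ℕ) : Fin b → MvPolynomial (Fin b) ℤ := fun i =>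
  if h : (i : ℕ) + 1 < b then X i ^ 2 - (-2 * X i + X ⟨(i : ℕ) + 1, h⟩) else X i ^ 2

theorem Nat.digits_sum_two_pow_add {i r : ℕ} (h : r < 2 ^ i) :
    (Nat.digits 2 (2 ^ i + r)).sum = (Nat.digits 2 r).sum + 1 := by
  have hlen := (Nat.digits_length_le_iff (by norm_num) r).2 h
  have := Nat.digits_append_zeroes_append_digits (b := 2) (n := r) (m := 1)
    (k := i - (Nat.digits 2 r).length) (by norm_num) one_pos
  rw [Nat.add_sub_cancel' hlen, mul_one, add_comm] at this
  rw [← this]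
  simp

namespace Polynomial

noncomputable def coeffWeighted (c : ℕ → ℤ) : ℤ[X] →ₗ[ℤ] ℤ :=
  lsum fun k => c k • LinearMap.id

section coeffWeighted

variable (c : ℕ → ℤ)

theorem coeffWeighted_apply (p : ℤ[X]) :
    coeffWeighted c p = ∑ k ∈ p.support, c k * p.coeff k := by
  simp [coeffWeighted, Polynomial.sum_def]

theorem coeffWeighted_monomial (k : ℕ) (a : ℤ) : coeffWeighted c (monomial k a) = c k * a := by
  simp [coeffWeighted]

theorem coeffWeighted_const_mul (a : ℤ) (p : ℤ[X]) :
    coeffWeighted (fun k => a * c k) p = a * coeffWeighted c p := by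
  simp only [coeffWeighted_apply, Finset.mul_sum, mul_assoc]

theorem coeffWeighted_X_pow_mul (N : ℕ) (p : ℤ[X]) :
    coeffWeighted c (X ^ N * p) = coeffWeighted (fun k => c (k + N)) p := by
  induction p using Polynomial.induction_on' with
  | add p q hp hq => rw [mul_add, map_add, map_add, hp, hq]
  | monomial k a => rw [X_pow_mul_monomial, coeffWeighted_monomial, coeffWeighted_monomial]

theorem coeffWeighted_congr {c c' : ℕ → ℤ} {p : ℤ[X]} (h : ∀ k ≤ p.natDegree, c k = c' k) :
    coeffWeighted c p = coeffWeighted c' p := by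
  simp only [coeffWeighted_apply]
  exact Finset.sum_congr rfl fun k hk => by rw [h k (le_natDegree_of_mem_supp k hk)]

end coeffWeighted

theorem natDegree_prod_X_pow_two_pow_sub_one_lt {s : Finset ℕ} {m : ℕ} (hs : ∀ i ∈ s, i < m) :
    (∏ i ∈ s, (X ^ 2 ^ i - 1 : ℤ[X])).natDegree < 2 ^ m := by
  simp_rw [← C_1]
  rw [natDegree_prod_of_monic _ _ fun i _ => monic_X_pow_sub_C 1 (pow_ne_zero i two_ne_zero)]
  simpa only [natDegree_X_pow_sub_C] using Nat.geomSum_lt le_rfl hs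

noncomputable def gouldWeight : ℤ[X] →ₗ[ℤ] ℤ :=
  coeffWeighted fun k => 2 ^ (Nat.digits 2 k).sum

theorem gouldWeight_X_pow_mul {i : ℕ} {p : ℤ[X]} (hp : p.natDegree < 2 ^ i) :
    gouldWeight (X ^ 2 ^ i * p) = 2 * gouldWeight p := by
  rw [gouldWeight, coeffWeighted_X_pow_mul, ← coeffWeighted_const_mul]
  refine coeffWeighted_congr fun k hk => ?_
  rw [add_comm, Nat.digits_sum_two_pow_add (by omega), pow_succ, mul_comm]

theorem gouldWeight_prod_X_pow_two_pow_sub_one (s : Finset ℕ) :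
    gouldWeight (∏ i ∈ s, (X ^ 2 ^ i - 1 : ℤ[X])) = 1 := by
  induction s using Finset.induction_on_max with
  | empty =>
    rw [Finset.prod_empty, ← monomial_zero_one, gouldWeight, coeffWeighted_monomial]
    rfl
  | insert a s hlt ih =>
    rw [Finset.prod_insert fun ha => lt_irrefl a (hlt a ha), sub_mul, one_mul, map_sub,
      gouldWeight_X_pow_mul (natDegree_prod_X_pow_two_pow_sub_one_lt hlt), ih]
    norm_num

def foldedGould (m k : ℕ) : ℤ :=
  (k / 2 ^ m + 1 : ℕ) * 2 ^ (Nat.digits 2 (k % 2 ^ m)).sum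

theorem foldedGould_of_lt {m k : ℕ} (h : k < 2 ^ m) :
    foldedGould m k = 2 ^ (Nat.digits 2 k).sum := by
  simp [foldedGould, Nat.div_eq_of_lt h, Nat.mod_eq_of_lt h]

theorem foldedGould_add_two_pow (m k : ℕ) :
    foldedGould m (k + 2 ^ m) = foldedGould m k + 2 ^ (Nat.digits 2 (k % 2 ^ m)).sum := by
  simp only [foldedGould, Nat.add_div_right _ (pow_pos two_pos m), Nat.add_mod_right]
  push_cast
  ring

noncomputable def foldedGouldWeight (m : ℕ) : ℤ[X] →ₗ[ℤ] ℤ :=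
  coeffWeighted (foldedGould m)

theorem foldedGouldWeight_of_natDegree_lt {m : ℕ} {p : ℤ[X]} (hp : p.natDegree < 2 ^ m) :
    foldedGouldWeight m p = gouldWeight p :=
  coeffWeighted_congr fun _ hk => foldedGould_of_lt (by omega)

theorem foldedGouldWeight_X_pow_mul {m : ℕ} {p : ℤ[X]} (hp : p.natDegree < 2 ^ m) :
    foldedGouldWeight m (X ^ 2 ^ m * p) = 2 * gouldWeight p := by
  rw [foldedGouldWeight, coeffWeighted_X_pow_mul, gouldWeight, ← coeffWeighted_const_mul]
  refine coeffWeighted_congr fun k hk => ?_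
  rw [foldedGould_add_two_pow, foldedGould_of_lt (by omega), Nat.mod_eq_of_lt (by omega)]
  ring

theorem foldedGouldWeight_mul_sq_eq_zero (m : ℕ) (p : ℤ[X]) :
    foldedGouldWeight m (p * (X ^ 2 ^ m - 1) ^ 2) = 0 := by
  have hexpand : p * (X ^ 2 ^ m - 1) ^ 2 =
      X ^ 2 ^ m * (X ^ 2 ^ m * p) - C 2 * (X ^ 2 ^ m * p) + p := by
    rw [C_ofNat]; ring
  rw [hexpand, C_mul', map_add, map_sub, map_smul, foldedGouldWeight, coeffWeighted_X_pow_mul,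
    coeffWeighted_X_pow_mul, coeffWeighted_X_pow_mul]
  simp only [coeffWeighted_apply, smul_eq_mul, Finset.mul_sum, ← Finset.sum_sub_distrib,
    ← Finset.sum_add_distrib]
  refine Finset.sum_eq_zero fun k _ => ?_
  have h1 := foldedGould_add_two_pow m k
  have h2 := foldedGould_add_two_pow m (k + 2 ^ m)
  rw [Nat.add_mod_right] at h2
  linear_combination p.coeff k * (h2 - h1)

theorem foldedGouldWeight_prod_X_pow_two_pow_sub_one {m : ℕ} {s : Finset ℕ}
    (hs : ∀ i ∈ s, i ≤ m) :
    foldedGouldWeight m (∏ i ∈ s, (X ^ 2 ^ i - 1 : ℤ[X])) = 1 := by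
  by_cases hm : m ∈ s
  · have hlt : ∀ i ∈ s.erase m, i < m := fun i hi =>
      lt_of_le_of_ne (hs i (Finset.mem_of_mem_erase hi)) (Finset.ne_of_mem_erase hi)
    have hdeg := natDegree_prod_X_pow_two_pow_sub_one_lt hlt
    rw [← Finset.insert_erase hm, Finset.prod_insert (Finset.notMem_erase m s), sub_mul, one_mul,
      map_sub, foldedGouldWeight_X_pow_mul hdeg, foldedGouldWeight_of_natDegree_lt hdeg,
      gouldWeight_prod_X_pow_two_pow_sub_one]
    norm_num
  · have hlt : ∀ i ∈ s, i < m := fun i hi => lt_of_le_of_ne (hs i hi) fun h => hm (h ▸ hi)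
    rw [foldedGouldWeight_of_natDegree_lt (natDegree_prod_X_pow_two_pow_sub_one_lt hlt),
      gouldWeight_prod_X_pow_two_pow_sub_one]

theorem gouldWeight_X_add_C_pow (t : ℤ) (n : ℕ) :
    gouldWeight ((X + C t) ^ n) =
      ∑ k ∈ Finset.range (n + 1), (n.choose k : ℤ) * t ^ (n - k) * 2 ^ (Nat.digits 2 k).sum := by
  rw [gouldWeight, coeffWeighted, lsum_apply,
    sum_over_range' _ (fun _ => by simp) (n + 1) (by rw [natDegree_pow_X_add_C]; omega)]
  refine Finset.sum_congr rfl fun k _ => ?_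
  simp only [coeff_X_add_C_pow, LinearMap.smul_apply, LinearMap.id_apply, smul_eq_mul]
  ring

end Polynomial

noncomputable def substTwoPowSubOne (m : ℕ) : MvPolynomial (Fin (m + 1)) ℤ →ₐ[ℤ] Polynomial ℤ :=
  aeval fun i => Polynomial.X ^ 2 ^ (i : ℕ) - 1

theorem substTwoPowSubOne_gens'_mem (m : ℕ) (i : Fin (m + 1)) :
    substTwoPowSubOne m (gens' (m + 1) i) ∈ Ideal.span {(Polynomial.X ^ 2 ^ m - 1) ^ 2} := by
  unfold gens'
  split_ifs with h
  · convert Ideal.zero_mem _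
    simp only [substTwoPowSubOne, map_sub, map_add, map_mul, map_pow, map_neg, map_ofNat, aeval_X,
      pow_succ]
    ring
  · have hi : (i : ℕ) = m := by omega
    simpa only [substTwoPowSubOne, map_pow, aeval_X, hi] using Ideal.mem_span_singleton_self _

theorem foldedGouldWeight_substTwoPowSubOne_of_mem {m : ℕ} {x : MvPolynomial (Fin (m + 1)) ℤ}
    (hx : x ∈ Ideal.span (Set.range (gens' (m + 1)))) :
    Polynomial.foldedGouldWeight m (substTwoPowSubOne m x) = 0 := by
  have hle : Ideal.span (Set.range (gens' (m + 1))) ≤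
      (Ideal.span {(Polynomial.X ^ 2 ^ m - 1) ^ 2}).comap (substTwoPowSubOne m) := by
    rw [Ideal.span_le]
    rintro _ ⟨i, rfl⟩
    exact substTwoPowSubOne_gens'_mem m i
  obtain ⟨q, hq⟩ := Ideal.mem_span_singleton'.1 (Ideal.mem_comap.1 (hle hx))
  rw [← hq, Polynomial.foldedGouldWeight_mul_sq_eq_zero]

theorem foldedGouldWeight_substTwoPowSubOne_of_le_one {m : ℕ} {g : MvPolynomial (Fin (m + 1)) ℤ}
    (hml : ∀ v ∈ g.support, ∀ i, v i ≤ 1) :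
    Polynomial.foldedGouldWeight m (substTwoPowSubOne m g) = eval (fun _ => 1) g := by
  conv_lhs => rw [g.as_sum]
  rw [map_sum, map_sum, eval_eq]
  refine Finset.sum_congr rfl fun v hv => ?_
  have hsubst : substTwoPowSubOne m (monomial v (coeff v g)) =
      Polynomial.C (coeff v g) *
        ∏ j ∈ v.support.map Fin.valEmbedding, (Polynomial.X ^ 2 ^ j - 1) := by
    rw [substTwoPowSubOne, aeval_monomial, Finset.prod_map, Finsupp.prod]
    congr 1
    refine Finset.prod_congr rfl fun i hi => ?_
    rw [le_antisymm (hml v hv i) (Nat.one_le_iff_ne_zero.2 (Finsupp.mem_support_iff.1 hi)),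
      pow_one]
    rfl
  rw [hsubst, Polynomial.C_mul', map_smul, Polynomial.foldedGouldWeight_prod_X_pow_two_pow_sub_one]
  · simp
  · simp only [Finset.mem_map, Fin.valEmbedding_apply]
    rintro _ ⟨i, -, rfl⟩
    exact Nat.lt_succ_iff.1 i.isLt

theorem substTwoPowSubOne_C_add_one_add_X_zero_pow (m n : ℕ) (t : ℤ) :
    substTwoPowSubOne m ((C t + 1 + X 0) ^ n) = (Polynomial.X + Polynomial.C t) ^ n := by
  simp only [substTwoPowSubOne, map_pow, map_add, map_one, aeval_X, aeval_C, Fin.val_zero,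
    pow_zero, pow_one, Polynomial.algebraMap_apply, Algebra.algebraMap_self, RingHom.id_apply]
  ring

theorem eval_one_eq_sum_choose_mul_pow_mul_two_pow {m n : ℕ} (hn : n < 2 ^ m) (t : ℤ)
    {g : MvPolynomial (Fin (m + 1)) ℤ} (hml : ∀ v ∈ g.support, ∀ i, v i ≤ 1)
    (hg : (C t + 1 + X 0) ^ n - g ∈ Ideal.span (Set.range (gens' (m + 1)))) :
    eval (fun _ => 1) g =
      ∑ k ∈ Finset.range (n + 1), (n.choose k : ℤ) * t ^ (n - k) * 2 ^ (Nat.digits 2 k).sum := by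
  have hkill := foldedGouldWeight_substTwoPowSubOne_of_mem hg
  rw [map_sub, map_sub, sub_eq_zero, substTwoPowSubOne_C_add_one_add_X_zero_pow,
    Polynomial.foldedGouldWeight_of_natDegree_lt (by rwa [Polynomial.natDegree_pow_X_add_C])]
    at hkill
  rw [← foldedGouldWeight_substTwoPowSubOne_of_le_one hml, ← hkill,
    Polynomial.gouldWeight_X_add_C_pow]

theorem stmt10 (n : ℕ) (b : ℕ) (hb : b = Nat.log 2 n + 2) (t : ℤ)
    (g : MvPolynomial (Fin b) ℤ)
    (hml : ∀ m ∈ g.support, ∀ i : Fin b, m i ≤ 1)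
    (hg : (C t + 1 + X (⟨0, by omega⟩ : Fin b)) ^ n - g ∈ Ideal.span (Set.range (gens' b))) :
    eval (fun _ : Fin b => (1 : ℤ)) g
      = ∑ k ∈ Finset.range (n + 1),
          (n.choose k : ℤ) * t ^ (n - k) * 2 ^ (Nat.digits 2 k).sum := by
  subst hb
  exact eval_one_eq_sum_choose_mul_pow_mul_two_pow (Nat.lt_pow_succ_log_self one_lt_two n) t hml hg
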